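/- Let p ≥ 2, let 𝒥 be a partition of {1,…,p}, and let I ⊂ ℝ be an interval of positive length containing 0. Write i ∼ j iff i and j lie in the same block of 𝒥; let G_𝒥 := {R ∈ SO(p) : R_ij = 0 whenever i ≁ j} and 𝔤_𝒥 := {A a p×p real antisymmetric matrix : A_ij = 0 whenever i ≁ j}. Then for any p×p real antisymmetric matrices A and B, the following are equivalent: (1) B − A ∈ 𝔤_𝒥 and (ad_B)^j(A) ∈ 𝔤_𝒥 for all integers j ≥ 1; (2) there exists a C^∞ map g : I → SO(p) with g(t) ∈ G_𝒥 for all t ∈ I such that exp(tB) = exp(tA)·g(t) for all t ∈ I. -/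

import Mathlib

open Matrix

/-- `p × p` real matrices. -/
abbrev Mat (p : ℕ) := Matrix (Fin p) (Fin p) ℝ

/-- `U ∈ SO(p)`: a rotation matrix. -/
def IsSO {p : ℕ} (U : Mat p) : Prop := U * Uᵀ = 1 ∧ U.det = 1

/-- `D ∈ Diag⁺(p)`: diagonal with positive diagonal entries. -/
def IsDiagPos {p : ℕ} (D : Mat p) : Prop := D.IsDiag ∧ ∀ i, 0 < D i i

/-- Antisymmetric matrix. -/
def IsAntisym {p : ℕ} (A : Mat p) : Prop := Aᵀ = -A

/-- The permutation matrix `P⁰_π`: in column `j`, the entry `π j` equals 1. -/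
def P0 {p : ℕ} (π : Equiv.Perm (Fin p)) : Mat p :=
  Matrix.of fun i j => if i = π j then (1 : ℝ) else 0

/-- `diag(−1,1,…,1)`. -/
def flipMat (p : ℕ) : Mat p :=
  Matrix.diagonal fun i => if (i : ℕ) = 0 then (-1 : ℝ) else 1

open scoped Classical in
/-- `P_π`: the determinant-one modification of `P⁰_π`. -/
noncomputable def Pmat {p : ℕ} (π : Equiv.Perm (Fin p)) : Mat p :=
  if (P0 π).det = 1 then P0 π else flipMat p * P0 π

/-- `D_π := P_π D P_πᵀ`. -/
noncomputable def permDiag {p : ℕ} (π : Equiv.Perm (Fin p)) (D : Mat p) : Mat p :=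
  Pmat π * D * (Pmat π)ᵀ

/-- The stabilizer group `G_D = {R ∈ SO(p) : R D Rᵀ = D}`. -/
def GD {p : ℕ} (D : Mat p) : Set (Mat p) := {R | IsSO R ∧ R * D * Rᵀ = D}

/-- Squared Frobenius norm. -/
noncomputable def frobSq {p : ℕ} (A : Mat p) : ℝ := ∑ i, ∑ j, (A i j) ^ 2

/-- `d_SO(U,V)²`: the minimal value of `‖A‖_F²/2` over antisymmetric `A` with `exp A = V Uᵀ`. -/
noncomputable def dSOsq {p : ℕ} (U V : Mat p) : ℝ :=
  sInf {x | ∃ A : Mat p, IsAntisym A ∧ NormedSpace.exp A = V * Uᵀ ∧ x = frobSq A / 2}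

/-- `d_𝒟(D,Λ)²`. -/
noncomputable def dDsq {p : ℕ} (D Λ : Mat p) : ℝ :=
  ∑ i, (Real.log (Λ i i) - Real.log (D i i)) ^ 2

/-- The geodesic distance on `SO(p) × Diag⁺(p)` (with weight `k`). -/
noncomputable def gdist {p : ℕ} (k : ℝ) (a b : Mat p × Mat p) : ℝ :=
  Real.sqrt (k * dSOsq a.1 b.1 + dDsq a.2 b.2)

/-- `𝓔_X`: the set of versions (eigen-decompositions) of `X`. -/
def Versions {p : ℕ} (X : Mat p) : Set (Mat p × Mat p) :=
  {a | IsSO a.1 ∧ IsDiagPos a.2 ∧ a.1 * a.2 * a.1ᵀ = X}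

/-- The scaling–rotation distance on `Sym⁺(p)`. -/
noncomputable def dSR {p : ℕ} (k : ℝ) (X Y : Mat p) : ℝ :=
  sInf {x | ∃ a ∈ Versions X, ∃ b ∈ Versions Y, x = gdist k a b}

attribute [local instance] Matrix.normedAddCommGroup Matrix.normedSpace

/-- `ad_B(C) = BC − CB`. -/
def adM {p : ℕ} (B : Mat p) (C : Mat p) : Mat p := B * C - C * B

namespace EF
variable {p : ℕ}

/-- the sup-norm normed group on matrices, with the matrix uniform structure -/
noncomputable abbrev nacgMat : NormedAddCommGroup (Mat p) :=
  { toNorm := (Matrix.normedAddCommGroup : NormedAddCommGroup (Mat p)).toNorm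
    toAddCommGroup := Matrix.addCommGroup
    toMetricSpace := @MetricSpace.replaceUniformity _ (Matrix.instUniformSpace _ _ ℝ)
      (Matrix.normedAddCommGroup : NormedAddCommGroup (Mat p)).toMetricSpace rfl
    dist_eq := (Matrix.normedAddCommGroup : NormedAddCommGroup (Mat p)).dist_eq }

noncomputable abbrev nsMat : @NormedSpace ℝ (Mat p) _ nacgMat.toSeminormedAddCommGroup :=
  @NormedSpace.mk ℝ (Mat p) _ nacgMat.toSeminormedAddCommGroup Matrix.module
    (Matrix.normedSpace : NormedSpace ℝ (Mat p)).norm_smul_le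

attribute [local instance] nacgMat nsMat

/-- entry functional as CLM -/
noncomputable def entryCLM (i j : Fin p) : Mat p →L[ℝ] ℝ :=
  LinearMap.toContinuousLinearMap
    { toFun := fun X => X i j
      map_add' := fun _ _ => rfl
      map_smul' := fun _ _ => rfl }

@[simp] lemma entryCLM_apply (i j : Fin p) (X : Mat p) : entryCLM i j X = X i j := rfl

/-- multiplication as a continuous bilinear map -/
noncomputable def mulCLM : Mat p →L[ℝ] Mat p →L[ℝ] Mat p :=
  LinearMap.toContinuousLinearMap
    { toFun := fun X => LinearMap.toContinuousLinearMap
        { toFun := fun Y => X * Y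
          map_add' := fun Y Z => Matrix.mul_add X Y Z
          map_smul' := fun c Y => (Matrix.mul_smul X c Y) }
      map_add' := fun X Y => by
        apply ContinuousLinearMap.ext; intro Z
        simp [LinearMap.toContinuousLinearMap, Matrix.add_mul]
      map_smul' := fun c X => by
        apply ContinuousLinearMap.ext; intro Z
        simp [LinearMap.toContinuousLinearMap, Matrix.smul_mul] }

@[simp] lemma mulCLM_apply (X Y : Mat p) : mulCLM X Y = X * Y := rfl

/-- left/right multiplication operators and `ad`-type operator -/
noncomputable def Lop (M : Mat p) : Mat p →L[ℝ] Mat p := mulCLM M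
noncomputable def Rop (M : Mat p) : Mat p →L[ℝ] Mat p := mulCLM.flip M
noncomputable def Dop (B : Mat p) : Mat p →L[ℝ] Mat p := Rop B - Lop B

@[simp] lemma Lop_apply (M X : Mat p) : Lop M X = M * X := rfl
@[simp] lemma Rop_apply (M X : Mat p) : Rop M X = X * M := rfl
@[simp] lemma Dop_apply (B X : Mat p) : Dop B X = X * B - B * X := rfl

@[simp] lemma Lop_smul (c : ℝ) (M : Mat p) : Lop (c • M) = c • Lop M :=
  _root_.map_smul mulCLM c M
@[simp] lemma Dop_smul (c : ℝ) (B : Mat p) : Dop (c • B) = c • Dop B := by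
  refine ContinuousLinearMap.ext fun X => ?_
  simp only [Dop_apply, ContinuousLinearMap.smul_apply, Matrix.mul_smul, Matrix.smul_mul,
    smul_sub]
@[simp] lemma Dop_neg (B : Mat p) : Dop (-B) = -(Dop B) := by
  refine ContinuousLinearMap.ext fun X => ?_
  simp only [Dop_apply, ContinuousLinearMap.neg_apply, Matrix.mul_neg, Matrix.neg_mul,
    neg_sub_neg]
  abel

lemma Lop_pow_apply (M : Mat p) (n : ℕ) (X : Mat p) : ((Lop M) ^ n) X = M ^ n * X := by
  induction n with
  | zero => simp
  | succ n ih => rw [pow_succ', ContinuousLinearMap.mul_apply, ih, Lop_apply, pow_succ',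
      mul_assoc]

lemma Rop_pow_apply (M : Mat p) (n : ℕ) (X : Mat p) : ((Rop M) ^ n) X = X * M ^ n := by
  induction n with
  | zero => simp
  | succ n ih => rw [pow_succ', ContinuousLinearMap.mul_apply, ih, Rop_apply, pow_succ,
      mul_assoc]

/-- the off-pattern-vanishing predicate -/
def Off (r : Fin p → Fin p → Prop) (X : Mat p) : Prop := ∀ i j, ¬ r i j → X i j = 0

variable {r : Fin p → Fin p → Prop}

lemma off_one (hr : Equivalence r) : Off r (1 : Mat p) := by
  intro i j h
  have : i ≠ j := fun hij => h (hij ▸ hr.refl i)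
  exact Matrix.one_apply_ne this

lemma off_mul (hr : Equivalence r) {X Y : Mat p} (hX : Off r X) (hY : Off r Y) :
    Off r (X * Y) := by
  intro i j h
  rw [Matrix.mul_apply]
  refine Finset.sum_eq_zero fun k _ => ?_
  by_cases hkj : r k j
  · have : ¬ r i k := fun hik => h (hr.trans hik hkj)
    rw [hX i k this, zero_mul]
  · rw [hY k j hkj, mul_zero]

lemma off_transpose (hr : Equivalence r) {X : Mat p} (hX : Off r X) : Off r Xᵀ := by
  intro i j h
  exact hX j i fun hji => h (hr.symm hji)

lemma off_neg {X : Mat p} (hX : Off r X) : Off r (-X) := by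
  intro i j h; simp [hX i j h]

lemma off_smul (c : ℝ) {X : Mat p} (hX : Off r X) : Off r (c • X) := by
  intro i j h; simp [hX i j h]

lemma off_smul_iff {c : ℝ} (hc : c ≠ 0) {X : Mat p} : Off r (c • X) ↔ Off r X := by
  constructor
  · intro h i j hij
    have := h i j hij
    simp only [Matrix.smul_apply, smul_eq_mul, mul_eq_zero] at this
    tauto
  · exact off_smul c

lemma off_neg_iff {X : Mat p} : Off r (-X) ↔ Off r X := by
  constructor
  · intro h; simpa using off_neg h
  · exact off_neg

open Classical in
/-- the projection onto off-pattern entries, as a CLM -/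
noncomputable def prCLM (r : Fin p → Fin p → Prop) : Mat p →L[ℝ] Mat p :=
  LinearMap.toContinuousLinearMap
    { toFun := fun X => Matrix.of fun i j => if r i j then 0 else X i j
      map_add' := fun X Y => by
        funext i j
        by_cases h : r i j <;> simp [Matrix.add_apply, h]
      map_smul' := fun c X => by
        funext i j
        by_cases h : r i j <;> simp [Matrix.smul_apply, h] }

open Classical in
lemma prCLM_apply (X : Mat p) (i j : Fin p) :
    prCLM r X i j = if r i j then 0 else X i j := rfl

lemma off_iff_pr {X : Mat p} : Off r X ↔ prCLM r X = 0 := by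
  classical
  constructor
  · intro h
    funext i j  -- Matrix ext
    rw [prCLM_apply]
    by_cases hij : r i j
    · simp [hij]
    · simp [hij, h i j hij]
  · intro h i j hij
    have := congrFun (congrFun h i) j
    rwa [prCLM_apply, if_neg hij] at this

lemma pr_mul (hr : Equivalence r) {X Y : Mat p} (hY : Off r Y) :
    prCLM r (X * Y) = prCLM r X * Y := by
  classical
  funext i j
  rw [prCLM_apply]
  by_cases hij : r i j
  · rw [if_pos hij]
    symm
    rw [Matrix.mul_apply]
    refine Finset.sum_eq_zero fun k _ => ?_
    by_cases hkj : r k j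
    · have : r i k := hr.trans hij (hr.symm hkj)
      rw [prCLM_apply, if_pos this, zero_mul]
    · rw [hY k j hkj, mul_zero]
  · rw [if_neg hij, Matrix.mul_apply, Matrix.mul_apply]
    refine Finset.sum_congr rfl fun k _ => ?_
    by_cases hkj : r k j
    · have : ¬ r i k := fun hik => hij (hr.trans hik hkj)
      rw [prCLM_apply, if_neg this]
    · rw [hY k j hkj, mul_zero, mul_zero]

lemma pr_one (hr : Equivalence r) : prCLM r (1 : Mat p) = 0 :=
  off_iff_pr.mp (off_one hr)


section Exp

open NormedSpace (exp)

lemma expE_apply (T : Mat p →L[ℝ] Mat p) (X : Mat p) :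
    exp T X = ∑' n : ℕ, ((n.factorial : ℝ)⁻¹ • T ^ n) X := by
  have h : exp T = ∑' n : ℕ, (n.factorial : ℝ)⁻¹ • T ^ n := by
    rw [NormedSpace.exp_eq_tsum ℝ]
  rw [h]
  exact (ContinuousLinearMap.apply ℝ (Mat p) X).map_tsum
    (NormedSpace.expSeries_summable' (𝕂 := ℝ) T)

lemma hasSum_expMat (M : Mat p) :
    HasSum (fun n : ℕ => ((n.factorial : ℝ)⁻¹) • M ^ n) (exp M) := by
  have hs := (NormedSpace.expSeries_summable' (𝕂 := ℝ) (Lop M)).hasSum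
  have he : (∑' n : ℕ, (n.factorial : ℝ)⁻¹ • Lop M ^ n) = exp (Lop M) := by
    rw [NormedSpace.exp_eq_tsum ℝ]
  rw [he] at hs
  have h := hs.mapL (ContinuousLinearMap.apply ℝ (Mat p) 1)
  simp only [ContinuousLinearMap.apply_apply, ContinuousLinearMap.smul_apply,
    Lop_pow_apply, mul_one] at h
  have h2 : exp (Lop M) 1 = exp M := by
    rw [expE_apply, NormedSpace.exp_eq_tsum ℝ]
    exact tsum_congr fun n => by
      rw [ContinuousLinearMap.smul_apply, Lop_pow_apply]
      simp [ContinuousLinearMap.smul_apply, Lop_pow_apply]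
  rwa [h2] at h

lemma expL_apply (M X : Mat p) : exp (Lop M) X = exp M * X := by
  have h := ((hasSum_expMat M).mapL (Rop X)).tsum_eq
  simp only [Rop_apply] at h
  rw [expE_apply, ← h]
  exact tsum_congr fun n => by
    rw [ContinuousLinearMap.smul_apply, Lop_pow_apply]
    simp [ContinuousLinearMap.smul_apply, Lop_pow_apply, Matrix.smul_mul]

lemma expR_apply (M X : Mat p) : exp (Rop M) X = X * exp M := by
  have h := ((hasSum_expMat M).mapL (Lop X)).tsum_eq
  simp only [Lop_apply] at h
  rw [expE_apply, ← h]
  exact tsum_congr fun n => by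
    rw [ContinuousLinearMap.smul_apply, Rop_pow_apply]
    simp [ContinuousLinearMap.smul_apply, Rop_pow_apply, Matrix.mul_smul]

lemma exp_comm (M N : Mat p) (h : M * N = N * M) : exp N * M = M * exp N := by
  have h1 := ((hasSum_expMat N).mapL (Rop M)).tsum_eq
  have h2 := ((hasSum_expMat N).mapL (Lop M)).tsum_eq
  simp only [Rop_apply] at h1
  simp only [Lop_apply] at h2
  rw [← h1, ← h2]
  refine tsum_congr fun n => ?_
  have hc : Commute M N := h
  simp only [Rop_apply, Lop_apply, Matrix.smul_mul, Matrix.mul_smul]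
  rw [((hc.symm.pow_left n)).eq]

lemma exp_neg_mul_exp (X : Mat p) : exp (-X) * exp X = 1 := by
  have h := Matrix.exp_add_of_commute (-X) X (Commute.neg_left (Commute.refl X))
  rw [neg_add_cancel, NormedSpace.exp_zero] at h
  exact h.symm

lemma exp_mul_exp_neg (X : Mat p) : exp X * exp (-X) = 1 := by
  have h := Matrix.exp_add_of_commute X (-X) (Commute.neg_right (Commute.refl X))
  rw [add_neg_cancel, NormedSpace.exp_zero] at h
  exact h.symm

lemma expDop_apply (B X : Mat p) :
    exp (Dop B) X = exp (-B) * X * exp B := by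
  have hc : Commute (Rop B) (-(Lop B)) := by
    show Rop B * -(Lop B) = -(Lop B) * Rop B
    refine ContinuousLinearMap.ext fun Y => ?_
    simp [ContinuousLinearMap.mul_apply, Matrix.neg_mul, Matrix.mul_neg, mul_assoc]
  have h1 : exp (Dop B) = exp (Rop B) * exp (-(Lop B)) := by
    rw [show Dop B = Rop B + -(Lop B) from sub_eq_add_neg _ _]
    letI : NormedAlgebra ℚ (Mat p →L[ℝ] Mat p) := .restrictScalars ℚ ℝ _
    exact NormedSpace.exp_add_of_commute hc
  have h2 : -(Lop B) = Lop (-B) := (_root_.map_neg mulCLM B).symm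
  rw [h1, ContinuousLinearMap.mul_apply, h2, expL_apply, expR_apply]

end Exp

section Curves

open NormedSpace (exp)
open scoped ContDiff

/-- the curve `t ↦ exp(-tA) exp(tB)` -/
noncomputable def phi (A B : Mat p) : ℝ → Mat p :=
  fun t => exp (t • (-A)) * exp (t • B)

/-- the curves `t ↦ exp(-tB) ((Dop B)^j (B-A)) exp(tB)`, via the `Dop` exponential -/
noncomputable def psi (B C : Mat p) (j : ℕ) : ℝ → Mat p :=
  fun t => exp (t • Dop B) ((Dop B ^ j) C)

lemma psi_eq (B C : Mat p) (j : ℕ) (t : ℝ) :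
    psi B C j t = exp (t • (-B)) * ((Dop B ^ j) C) * exp (t • B) := by
  unfold psi
  rw [show t • Dop B = Dop (t • B) from (Dop_smul t B).symm, expDop_apply, ← smul_neg]

lemma psi_zero (B C : Mat p) (j : ℕ) : psi B C j 0 = (Dop B ^ j) C := by
  unfold psi
  rw [zero_smul, NormedSpace.exp_zero, ContinuousLinearMap.one_apply]

lemma hasDerivAt_expE (T : Mat p →L[ℝ] Mat p) (X : Mat p) (t : ℝ) :
    HasDerivAt (fun u : ℝ => exp (u • T) X) (exp (t • T) (T X)) t := by
  have h := (hasDerivAt_exp_smul_const (𝕂 := ℝ) T t).clm_apply (hasDerivAt_const t X)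
  simpa [ContinuousLinearMap.mul_apply] using h

lemma hasDerivAt_psi (B C : Mat p) (j : ℕ) (t : ℝ) :
    HasDerivAt (psi B C j) (psi B C (j + 1) t) t := by
  have h := hasDerivAt_expE (Dop B) ((Dop B ^ j) C) t
  have : Dop B ((Dop B ^ j) C) = (Dop B ^ (j + 1)) C := by
    rw [pow_succ']; rfl
  rwa [this] at h

lemma expCurve_eq (M : Mat p) :
    (fun t : ℝ => exp (t • M)) = fun t : ℝ => exp (t • Lop M) 1 := by
  funext t
  rw [← Lop_smul, expL_apply, mul_one]

lemma hasDerivAt_expMat (M : Mat p) (t : ℝ) :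
    HasDerivAt (fun u : ℝ => exp (u • M)) (exp (t • M) * M) t := by
  rw [expCurve_eq]
  have h := hasDerivAt_expE (Lop M) 1 t
  have h2 : exp (t • Lop M) (Lop M 1) = exp (t • M) * M := by
    rw [Lop_apply, mul_one, ← Lop_smul, expL_apply]
  rwa [h2] at h

lemma contDiff_expE (T : Mat p →L[ℝ] Mat p) :
    ContDiff ℝ ω (fun t : ℝ => exp (t • T)) := by
  rw [contDiff_omega_iff_analyticOnNhd]
  intro x _
  have h1 : AnalyticAt ℝ (fun t : ℝ => t • T) x :=
    ((ContinuousLinearMap.id ℝ ℝ).smulRight T).analyticAt x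
  exact AnalyticAt.comp (g := exp) (f := fun t : ℝ => t • T)
    (NormedSpace.exp_analytic _) h1

lemma contDiff_expMat (M : Mat p) : ContDiff ℝ ω (fun t : ℝ => exp (t • M)) := by
  rw [expCurve_eq]
  exact (ContinuousLinearMap.apply ℝ (Mat p) 1).contDiff.comp (contDiff_expE (Lop M))

lemma contDiff_phi (A B : Mat p) : ContDiff ℝ ω (phi A B) := by
  unfold phi
  exact (mulCLM.contDiff.comp (contDiff_expMat (-A))).clm_apply (contDiff_expMat B)

lemma hasDerivAt_phi (A B : Mat p) (t : ℝ) :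
    HasDerivAt (phi A B) (phi A B t * psi B (B - A) 0 t) t := by
  have hα := hasDerivAt_expMat (-A) t
  have hβ := hasDerivAt_expMat B t
  have hc : HasDerivAt (fun u : ℝ => mulCLM (exp (u • (-A))))
      (mulCLM (exp (t • (-A)) * (-A))) t :=
    (mulCLM.hasFDerivAt).comp_hasDerivAt t hα
  have h := hc.clm_apply hβ
  simp only [mulCLM_apply] at h
  have hcb : exp (t • B) * exp (t • (-B)) = 1 := by
    rw [smul_neg]; exact exp_mul_exp_neg (t • B)
  have h2 : exp (t • B) * B = B * exp (t • B) :=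
    exp_comm B (t • B) (by rw [Matrix.mul_smul, Matrix.smul_mul])
  have gen : ∀ a b c X : Mat p, b * c = 1 → a * b * (c * X * b) = a * (X * b) := by
    intro a b c X hbc
    calc a * b * (c * X * b) = a * (b * c * (X * b)) := by noncomm_ring
      _ = a * (X * b) := by rw [hbc, one_mul]
  have harr : exp (t • (-A)) * (-A) * exp (t • B)
      + exp (t • (-A)) * (exp (t • B) * B)
      = phi A B t * psi B (B - A) 0 t := by
    rw [psi_eq, pow_zero, ContinuousLinearMap.one_apply]
    unfold phi
    rw [gen (exp (t • (-A))) (exp (t • B)) (exp (t • (-B))) (B - A) hcb, h2]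
    noncomm_ring
  rwa [harr] at h

end Curves

section Main

open NormedSpace (exp)
open scoped ContDiff

variable {r : Fin p → Fin p → Prop} {A B C : Mat p}

lemma phi_zero (A B : Mat p) : phi A B 0 = 1 := by
  unfold phi
  rw [zero_smul, zero_smul, NormedSpace.exp_zero, one_mul]

lemma expMat_transpose (M : Mat p) (t : ℝ) : (exp (t • M))ᵀ = exp (t • Mᵀ) := by
  rw [← Matrix.exp_transpose, Matrix.transpose_smul]

lemma exp_smul_neg_mul (M : Mat p) (t : ℝ) : exp (t • (-M)) * exp (t • M) = 1 := by
  rw [smul_neg]; exact exp_neg_mul_exp (t • M)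

lemma exp_smul_mul_neg (M : Mat p) (t : ℝ) : exp (t • M) * exp (t • (-M)) = 1 := by
  rw [smul_neg]; exact exp_mul_exp_neg (t • M)

lemma phi_transpose (hA : IsAntisym A) (hB : IsAntisym B) (t : ℝ) :
    (phi A B t)ᵀ = exp (t • (-B)) * exp (t • A) := by
  unfold phi
  rw [Matrix.transpose_mul, expMat_transpose, expMat_transpose, hB, Matrix.transpose_neg, hA,
    neg_neg]

lemma phi_transpose_mul (hA : IsAntisym A) (hB : IsAntisym B) (t : ℝ) :
    (phi A B t)ᵀ * phi A B t = 1 := by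
  rw [phi_transpose hA hB]
  unfold phi
  rw [mul_assoc, ← mul_assoc (exp (t • A)), exp_smul_mul_neg A t, one_mul]
  exact exp_smul_neg_mul B t

lemma phi_mul_transpose (hA : IsAntisym A) (hB : IsAntisym B) (t : ℝ) :
    phi A B t * (phi A B t)ᵀ = 1 := by
  rw [phi_transpose hA hB]
  unfold phi
  rw [mul_assoc, ← mul_assoc (exp (t • B)), exp_smul_mul_neg B t, one_mul]
  exact exp_smul_neg_mul A t


lemma det_phi (hA : IsAntisym A) (hB : IsAntisym B) (t : ℝ) : (phi A B t).det = 1 := by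
  by_contra hne
  have hcont : Continuous fun s : ℝ => (phi A B s).det :=
    ((contDiff_phi A B).continuous).matrix_det
  have hsq : ∀ s : ℝ, (phi A B s).det * (phi A B s).det = 1 := by
    intro s
    have h := congrArg Matrix.det (phi_mul_transpose hA hB s)
    rwa [Matrix.det_mul, Matrix.det_transpose, Matrix.det_one] at h
  have h0 : (phi A B 0).det = 1 := by rw [phi_zero, Matrix.det_one]
  have hval : (phi A B t).det = -1 := by
    rcases mul_self_eq_one_iff.mp (hsq t) with h | h
    · exact absurd h hne
    · exact h
  obtain ⟨s, _, hs⟩ : ∃ s ∈ Set.uIcc (0:ℝ) t, (phi A B s).det = 0 := by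
    have h1 : (0:ℝ) ∈ Set.uIcc ((phi A B 0).det) ((phi A B t).det) := by
      rw [h0, hval]
      rw [Set.mem_uIcc]
      norm_num
    have h2 := intermediate_value_uIcc (hcont.continuousOn (s := Set.uIcc (0:ℝ) t)) h1
    obtain ⟨s, hmem, hs⟩ := h2
    exact ⟨s, hmem, hs⟩
  have := hsq s
  rw [hs] at this
  norm_num at this

lemma smul_pow_apply (t : ℝ) (T : Mat p →L[ℝ] Mat p) (n : ℕ) (X : Mat p) :
    ((t • T) ^ n) X = t ^ n • ((T ^ n) X) := by
  induction n with
  | zero => simp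
  | succ n ih =>
    rw [pow_succ', ContinuousLinearMap.mul_apply, ih, ContinuousLinearMap.smul_apply,
      _root_.map_smul, smul_smul, ← pow_succ']
    congr 1
    rw [pow_succ', ContinuousLinearMap.mul_apply]

lemma psi_zero_eq (B C : Mat p) (t : ℝ) : psi B C 0 t = exp (t • Dop B) C := by
  unfold psi
  rw [pow_zero, ContinuousLinearMap.one_apply]

lemma off_exp_dop (hyp : ∀ j : ℕ, Off r ((Dop B ^ j) C)) (t : ℝ) :
    Off r (exp (t • Dop B) C) := by
  intro i j hij
  have hs := NormedSpace.expSeries_summable' (𝕂 := ℝ) (t • Dop B)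
  have hsum : Summable fun n : ℕ => ((n.factorial : ℝ)⁻¹ • (t • Dop B) ^ n) C :=
    (hs.hasSum.mapL (ContinuousLinearMap.apply ℝ (Mat p) C)).summable
  have h2 : exp (t • Dop B) C i j
      = ∑' n : ℕ, ((((n.factorial : ℝ)⁻¹ • (t • Dop B) ^ n) C) i j) := by
    rw [expE_apply]
    exact (entryCLM i j).map_tsum hsum
  rw [h2]
  have hterm : ∀ n : ℕ, ((((n.factorial : ℝ)⁻¹ • (t • Dop B) ^ n) C) i j) = 0 := by
    intro n
    rw [ContinuousLinearMap.smul_apply, smul_pow_apply, Matrix.smul_apply, Matrix.smul_apply,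
      hyp n i j hij]
    simp [ContinuousLinearMap.smul_apply, smul_pow_apply, Matrix.smul_apply, hyp n i j hij]
  rw [tsum_congr hterm, tsum_zero]

lemma norm_matrix_mul_le (X Y : Mat p) : ‖X * Y‖ ≤ p * ‖X‖ * ‖Y‖ := by
  rw [Matrix.norm_le_iff (by positivity)]
  intro i j
  rw [Matrix.mul_apply]
  calc ‖∑ k, X i k * Y k j‖ ≤ ∑ k, ‖X i k * Y k j‖ := norm_sum_le _ _
    _ ≤ ∑ _k : Fin p, ‖X‖ * ‖Y‖ := by
        refine Finset.sum_le_sum fun k _ => ?_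
        rw [norm_mul]
        exact mul_le_mul (Matrix.norm_entry_le_entrywise_sup_norm X)
          (Matrix.norm_entry_le_entrywise_sup_norm Y) (norm_nonneg _) (norm_nonneg _)
    _ = p * ‖X‖ * ‖Y‖ := by
        rw [Finset.sum_const, Finset.card_univ, Fintype.card_fin, nsmul_eq_mul]
        ring

lemma pr_phi_eq_zero_nonneg (hr : Equivalence r) {A B : Mat p}
    (hoff : ∀ u : ℝ, Off r (psi B (B - A) 0 u)) :
    ∀ T : ℝ, 0 ≤ T → prCLM r (phi A B T) = 0 := by
  intro T hT
  have hF : ∀ t : ℝ, HasDerivAt (fun s => prCLM (p := p) r (phi A B s))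
      (prCLM r (phi A B t) * psi B (B - A) 0 t) t := by
    intro t
    have h := ((prCLM (p := p) r).hasFDerivAt).comp_hasDerivAt t (hasDerivAt_phi A B t)
    rwa [pr_mul hr (hoff t)] at h
  have hpsidiff : Differentiable ℝ (psi B (B - A) 0) :=
    fun t => (hasDerivAt_psi B (B - A) 0 t).differentiableAt
  obtain ⟨Cb, hCb⟩ := (isCompact_Icc (a := (0:ℝ)) (b := T)).exists_bound_of_continuousOn
      (hpsidiff.continuous.continuousOn)
  have key := norm_le_gronwallBound_of_norm_deriv_right_le (δ := 0)
      (K := p * max Cb 0) (ε := 0)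
      (f := fun s => prCLM (p := p) r (phi A B s))
      (f' := fun t => prCLM r (phi A B t) * psi B (B - A) 0 t) (a := 0) (b := T)
      (fun x _ => (hF x).continuousAt.continuousWithinAt)
      (fun x _ => (hF x).hasDerivWithinAt)
      (by show ‖prCLM (p := p) r (phi A B 0)‖ ≤ 0
          rw [phi_zero, pr_one hr, norm_zero])
      ?_ T (Set.right_mem_Icc.mpr hT)
  · rw [gronwallBound_ε0_δ0] at key
    exact norm_le_zero_iff.mp key
  · intro x hx
    have h1 : ‖psi B (B - A) 0 x‖ ≤ max Cb 0 :=
      le_trans (hCb x (Set.mem_Icc_of_Ico hx)) (le_max_left _ _)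
    calc ‖prCLM r (phi A B x) * psi B (B - A) 0 x‖
        ≤ p * ‖prCLM r (phi A B x)‖ * ‖psi B (B - A) 0 x‖ := norm_matrix_mul_le _ _
      _ ≤ p * ‖prCLM r (phi A B x)‖ * max Cb 0 := by
          refine mul_le_mul_of_nonneg_left h1 (by positivity)
      _ = p * max Cb 0 * ‖prCLM r (phi A B x)‖ + 0 := by ring

lemma off_phi_forward (hr : Equivalence r)
    (hyp : ∀ j : ℕ, Off r ((Dop B ^ j) (B - A))) (t : ℝ) : Off r (phi A B t) := by
  have main : ∀ (A B : Mat p), (∀ j : ℕ, Off r ((Dop B ^ j) (B - A))) →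
      ∀ s : ℝ, 0 ≤ s → Off r (phi A B s) := by
    intro A B hyp s hs
    have hoff : ∀ u : ℝ, Off r (psi B (B - A) 0 u) := by
      intro u
      rw [psi_zero_eq]
      exact off_exp_dop hyp u
    exact off_iff_pr.mpr (pr_phi_eq_zero_nonneg hr hoff s hs)
  rcases le_total 0 t with h | h
  · exact main A B hyp t h
  · have h2 : ∀ j : ℕ, Off r ((Dop (-B) ^ j) ((-B) - (-A))) := by
      intro j
      have heq : (Dop (-B) ^ j) ((-B) - (-A)) = -(((-1:ℝ)) ^ j • (((Dop B) ^ j) (B - A))) := by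
        have h1 : Dop (-B) = (-1:ℝ) • Dop B := by
          rw [Dop_neg]; exact (neg_one_smul ℝ _).symm
        rw [h1, show (-B) - (-A) = -(B - A) by abel, smul_pow_apply, _root_.map_neg, smul_neg]
      rw [heq]
      exact off_neg (off_smul _ (hyp j))
    have h3 := main (-A) (-B) h2 (-t) (by linarith)
    have h4 : phi (-A) (-B) (-t) = phi A B t := by
      unfold phi
      rw [neg_neg, show (-t) • A = t • (-A) by rw [neg_smul, ← smul_neg],
        show (-t) • (-B) = t • B by rw [neg_smul, smul_neg, neg_neg]]
    rwa [h4] at h3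


lemma phi_neg_neg (A B : Mat p) (t : ℝ) : phi (-A) (-B) t = phi A B (-t) := by
  unfold phi
  rw [neg_neg, show ((-t) • (-A) : Mat p) = t • A by rw [neg_smul, smul_neg, neg_neg],
    show ((-t) • B : Mat p) = t • (-B) by rw [neg_smul, ← smul_neg]]

lemma Dop_neg_pow_apply (A B : Mat p) (j : ℕ) :
    (Dop (-B) ^ j) ((-B) - (-A)) = -(((-1:ℝ)) ^ j • ((Dop B ^ j) (B - A))) := by
  have h1 : Dop (-B) = (-1:ℝ) • Dop B := by
    rw [Dop_neg]; exact (neg_one_smul ℝ _).symm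
  rw [h1, show (-B) - (-A) = -(B - A) by abel, smul_pow_apply, _root_.map_neg, smul_neg]

lemma zero_deriv_on_Icc {c : ℝ} (hc : 0 < c) {f g : ℝ → ℝ}
    (hf : ∀ t : ℝ, HasDerivAt f (g t) t) (h0 : ∀ t ∈ Set.Icc (0:ℝ) c, f t = 0) :
    ∀ t ∈ Set.Icc (0:ℝ) c, g t = 0 := by
  intro t ht
  have hu : UniqueDiffWithinAt ℝ (Set.Icc (0:ℝ) c) t := uniqueDiffOn_Icc hc t ht
  have h1 : derivWithin f (Set.Icc (0:ℝ) c) t = g t :=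
    ((hf t).hasDerivWithinAt).derivWithin hu
  rw [← h1, derivWithin_congr h0 (h0 t ht), derivWithin_fun_const, Pi.zero_apply]

lemma hyp_backward (hr : Equivalence r) {c : ℝ} (hc : 0 < c)
    (hA : IsAntisym A) (hB : IsAntisym B)
    (hoff : ∀ t ∈ Set.Icc (0:ℝ) c, Off r (phi A B t)) :
    ∀ j : ℕ, Off r ((Dop B ^ j) (B - A)) := by
  have hder : ∀ t ∈ Set.Icc (0:ℝ) c, Off r (phi A B t * psi B (B - A) 0 t) := by
    intro t ht i₁ j₁ hij
    exact zero_deriv_on_Icc hc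
      (f := fun s => phi A B s i₁ j₁) (g := fun s => (phi A B s * psi B (B - A) 0 s) i₁ j₁)
      (fun s => by
        have h := (entryCLM (p := p) i₁ j₁).hasFDerivAt.comp_hasDerivAt s (hasDerivAt_phi A B s)
        exact h)
      (fun s hs => hoff s hs i₁ j₁ hij) t ht
  have hpsi0 : ∀ t ∈ Set.Icc (0:ℝ) c, Off r (psi B (B - A) 0 t) := by
    intro t ht
    have h1 : psi B (B - A) 0 t
        = (phi A B t)ᵀ * (phi A B t * psi B (B - A) 0 t) := by
      rw [← mul_assoc, phi_transpose_mul hA hB, one_mul]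
    rw [h1]
    exact off_mul hr (off_transpose hr (hoff t ht)) (hder t ht)
  have hpsij : ∀ j : ℕ, ∀ t ∈ Set.Icc (0:ℝ) c, Off r (psi B (B - A) j t) := by
    intro j
    induction j with
    | zero => exact hpsi0
    | succ n ih =>
      intro t ht i₁ j₁ hij
      exact zero_deriv_on_Icc hc
        (f := fun s => psi B (B - A) n s i₁ j₁) (g := fun s => psi B (B - A) (n + 1) s i₁ j₁)
        (fun s => by
          have h := (entryCLM (p := p) i₁ j₁).hasFDerivAt.comp_hasDerivAt s
            (hasDerivAt_psi B (B - A) n s)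
          exact h)
        (fun s hs => ih s hs i₁ j₁ hij) t ht
  intro j
  have h := hpsij j 0 (Set.left_mem_Icc.mpr hc.le)
  rwa [psi_zero] at h

lemma adM_neg (B X : Mat p) : adM B (-X) = -(adM B X) := by
  unfold adM
  rw [Matrix.mul_neg, Matrix.neg_mul]
  abel

lemma adM_iter_neg (B : Mat p) (k : ℕ) (X : Mat p) :
    (adM B)^[k] (-X) = -((adM B)^[k] X) := by
  induction k generalizing X with
  | zero => simp
  | succ n ih =>
    rw [Function.iterate_succ_apply, Function.iterate_succ_apply, adM_neg]
    exact ih _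

lemma Dop_apply_eq_neg_adM (B X : Mat p) : Dop B X = -(adM B X) := by
  unfold adM
  rw [Dop_apply, neg_sub]

lemma Dop_pow_eq (B : Mat p) (j : ℕ) (X : Mat p) :
    (Dop B ^ j) X = ((-1:ℝ)) ^ j • (adM B)^[j] X := by
  induction j generalizing X with
  | zero => simp
  | succ n ih =>
    rw [pow_succ, ContinuousLinearMap.mul_apply, Dop_apply_eq_neg_adM, _root_.map_neg, ih,
      Function.iterate_succ_apply, ← neg_smul]
    congr 1
    ring

lemma adM_iter_sub (B A : Mat p) (k : ℕ) :
    (adM B)^[k + 1] (B - A) = -((adM B)^[k + 1] A) := by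
  rw [Function.iterate_succ_apply, Function.iterate_succ_apply,
    show adM B (B - A) = -(adM B A) by unfold adM; noncomm_ring]
  exact adM_iter_neg B k _

lemma off_X_iff (j : ℕ) (hj : 1 ≤ j) :
    Off r ((Dop B ^ j) (B - A)) ↔ Off r ((adM B)^[j] A) := by
  obtain ⟨k, rfl⟩ : ∃ k, j = k + 1 := ⟨j - 1, (Nat.succ_pred_eq_of_pos hj).symm⟩
  have hne : ((-1:ℝ)) ^ (k + 1) ≠ 0 := pow_ne_zero _ (by norm_num)
  rw [Dop_pow_eq, adM_iter_sub, smul_neg, off_neg_iff, off_smul_iff hne]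

lemma isAntisym_neg (hA : IsAntisym A) : IsAntisym (-A) := by
  unfold IsAntisym at *
  rw [Matrix.transpose_neg, hA]

lemma isAntisym_sub (hA : IsAntisym A) (hB : IsAntisym B) : IsAntisym (B - A) := by
  unfold IsAntisym at *
  rw [Matrix.transpose_sub, hA, hB]
  abel

lemma isAntisym_adM (hB : IsAntisym B) {X : Mat p} (hX : IsAntisym X) :
    IsAntisym (adM B X) := by
  unfold IsAntisym adM at *
  rw [Matrix.transpose_sub, Matrix.transpose_mul, Matrix.transpose_mul, hB, hX]
  noncomm_ring

lemma isAntisym_adM_iter (hB : IsAntisym B) (hA : IsAntisym A) (j : ℕ) :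
    IsAntisym ((adM B)^[j] A) := by
  induction j with
  | zero => exact hA
  | succ n ih =>
    rw [Function.iterate_succ_apply']
    exact isAntisym_adM hB ih

end Main

end EF

open EF

/-- algebraic characterization of when `exp(tB) = exp(tA) g(t)` for a
smooth curve `g` in the subgroup `G_𝒥` associated to a partition `𝒥` (given as an
equivalence relation `r`). -/
theorem exp_factorization_iff {p : ℕ} (hp : 2 ≤ p)
    (r : Fin p → Fin p → Prop) (hr : Equivalence r)
    (I : Set ℝ) (hI0 : (0 : ℝ) ∈ I) (hIconv : Convex ℝ I)
    (hIlen : ∃ a ∈ I, ∃ b ∈ I, a < b)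
    (A B : Mat p) (hA : IsAntisym A) (hB : IsAntisym B) :
    ((IsAntisym (B - A) ∧ ∀ i j, ¬ r i j → (B - A) i j = 0) ∧
      (∀ j : ℕ, 1 ≤ j → IsAntisym ((adM B)^[j] A) ∧
        ∀ i i' : Fin p, ¬ r i i' → ((adM B)^[j] A) i i' = 0)) ↔
    (∃ g : ℝ → Mat p, ContDiffOn ℝ (⊤ : ℕ∞) g I ∧
      (∀ t ∈ I, IsSO (g t) ∧ ∀ i j, ¬ r i j → g t i j = 0) ∧
      (∀ t ∈ I, NormedSpace.exp (t • B) = NormedSpace.exp (t • A) * g t)) := by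
  constructor
  · rintro ⟨⟨_, hoff0⟩, hj⟩
    have hyp : ∀ j : ℕ, Off r ((Dop B ^ j) (B - A)) := by
      intro j
      cases j with
      | zero =>
        rw [pow_zero, ContinuousLinearMap.one_apply]
        exact hoff0
      | succ k =>
        rw [off_X_iff (k + 1) (by omega)]
        exact (hj (k + 1) (by omega)).2
    refine ⟨phi A B, (by letI := @nacgMat p; letI := @nsMat p; exact (contDiff_phi A B).contDiffOn.of_le le_top), ?_, ?_⟩
    · intro t _
      exact ⟨⟨phi_mul_transpose hA hB t, det_phi hA hB t⟩,
        fun i j hij => off_phi_forward hr hyp t i j hij⟩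
    · intro t _
      unfold EF.phi
      rw [← mul_assoc, exp_smul_mul_neg A t, one_mul]
  · rintro ⟨g, _, hg2, hg3⟩
    have hphi : ∀ t ∈ I, Off r (phi A B t) := by
      intro t ht
      have hgt : phi A B t = g t := by
        unfold EF.phi
        rw [hg3 t ht, ← mul_assoc, exp_smul_neg_mul A t, one_mul]
      intro i j hij
      rw [hgt]
      exact (hg2 t ht).2 i j hij
    obtain ⟨a, ha, b, hb, hab⟩ := hIlen
    have hyp : ∀ j : ℕ, Off r ((Dop B ^ j) (B - A)) := by
      rcases lt_or_ge 0 b with hbpos | hbnp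
      · have hsub : Set.Icc (0:ℝ) b ⊆ I := hIconv.ordConnected.out hI0 hb
        exact hyp_backward hr hbpos hA hB (fun t ht => hphi t (hsub ht))
      · have hapos : a < 0 := lt_of_lt_of_le hab hbnp
        have hsub : Set.Icc a (0:ℝ) ⊆ I := hIconv.ordConnected.out ha hI0
        have hoff' : ∀ t ∈ Set.Icc (0:ℝ) (-a), Off r (phi (-A) (-B) t) := by
          intro t ht
          rw [phi_neg_neg]
          exact hphi (-t) (hsub ⟨by linarith [ht.2], by linarith [ht.1]⟩)
        have hb' := hyp_backward hr (by linarith : (0:ℝ) < -a)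
          (isAntisym_neg hA) (isAntisym_neg hB) hoff'
        intro j
        have h := hb' j
        rw [Dop_neg_pow_apply, off_neg_iff,
          off_smul_iff (pow_ne_zero _ (by norm_num : (-1:ℝ) ≠ 0))] at h
        exact h
    refine ⟨⟨isAntisym_sub hA hB, ?_⟩, fun j hj => ⟨isAntisym_adM_iter hB hA j, ?_⟩⟩
    · have h := hyp 0
      rwa [pow_zero, ContinuousLinearMap.one_apply] at h
    · exact (off_X_iff j hj).mp (hyp j)
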